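/- arXiv:1603.05028 — 2 statements merged into one kernel-verified Lean document; each statement's English description precedes it below -/
import Mathlib

section
/- Let V be a differential algebra with derivation ∂, equipped with a λ-bracket satisfying sesquilinearity, skew-symmetry, and the Jacobi identity (i.e., V is a Poisson vertex algebra). Then the operation {∫f, ∫g} := ∫({f_λ g}|_{λ=0}) is well defined on the quotient space V/∂V (i.e., it is independent of the choice of representatives f, g modulo ∂V) and makes V/∂V into a Lie algebra. -/
open Polynomial

section LambdaBracket

variable {F V : Type*} [Field F] [CharZero F] [CommRing V] [Algebra F V]

/-- Apply a derivation coefficientwise to a `λ`-polynomial. -/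
noncomputable def dCoeff (der : V →ₗ[F] V) (p : Polynomial V) : Polynomial V :=
  p.sum fun n c => Polynomial.C (der c) * Polynomial.X ^ n

/-- The operator `λ + ∂` on `λ`-polynomials. -/
noncomputable def opS (der : V →ₗ[F] V) (p : Polynomial V) : Polynomial V :=
  Polynomial.X * p + dCoeff der p

/-- The operator `-λ - ∂` on `λ`-polynomials. -/
noncomputable def opT (der : V →ₗ[F] V) (p : Polynomial V) : Polynomial V :=
  -(Polynomial.X * p) - dCoeff der p

/-- Given `{f_λ g} = Σ_n c_n λ^n`, this is `{f_{-λ-∂} g} = Σ_n (-λ-∂)^n c_n`. -/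
noncomputable def negSubst (der : V →ₗ[F] V) (p : Polynomial V) : Polynomial V :=
  p.sum fun n c => (opT der)^[n] (Polynomial.C c)

/-- The left-hand side of the Jacobi identity
`{f_λ {g_μ h}} - {g_μ {f_λ h}} - {{f_λ g}_{λ+μ} h}`, as an element of
`V[λ][μ]` (outer variable `μ`, inner variable `λ`). -/
noncomputable def jacobiLHS (B : V →ₗ[F] V →ₗ[F] Polynomial V) (f g h : V) :
    Polynomial (Polynomial V) :=
  (B g h).sum (fun m c => Polynomial.C (B f c) * Polynomial.X ^ m)
  - (B f h).sum (fun n c => (B g c).sum fun m d =>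
      Polynomial.C (Polynomial.C d * Polynomial.X ^ n) * Polynomial.X ^ m)
  - (B f g).sum (fun n c => (B c h).sum fun k d =>
      Polynomial.C (Polynomial.C d * Polynomial.X ^ n) *
        (Polynomial.C Polynomial.X + Polynomial.X) ^ k)

end LambdaBracket

/-!
Everything is read off at `λ = 0`. Sesquilinearity gives `{∂a_λ g}|₀ = 0` and
`{f_λ ∂b}|₀ = ∂({f_λ b}|₀)`, hence well-definedness. In `{f_{-λ-∂} g} = Σₙ (-λ-∂)ⁿ cₙ`
every term with `n > 0` has constant coefficient in `∂V`, so skew-symmetry of the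
`λ`-bracket gives `{g_λ f}|₀ ≡ -{f_λ g}|₀`. Finally, the coefficient of `λ⁰μ⁰` in the
Jacobi identity is exactly the Jacobi identity of the induced bracket.
-/

theorem map_polynomial_sum {R M N G : Type*} [Semiring R] [AddCommMonoid M] [AddCommMonoid N]
    [FunLike G M N] [AddMonoidHomClass G M N] (φ : G) (p : R[X]) (f : ℕ → R → M) :
    φ (p.sum f) = p.sum fun n c => φ (f n c) :=
  map_sum φ _ _

namespace Polynomial

variable {R : Type*} [Semiring R]

theorem sum_eq_single_zero {M : Type*} [AddCommMonoid M] (p : R[X]) (f : ℕ → R → M)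
    (hf : ∀ n ≠ 0, ∀ c, f n c = 0) (hf₀ : f 0 0 = 0) :
    p.sum f = f 0 (p.coeff 0) :=
  Finset.sum_eq_single 0 (fun n _ hn => hf n hn _)
    fun h => by rw [notMem_support_iff.mp h, hf₀]

theorem sum_mul_zero_pow {S : Type*} [Semiring S] (p : R[X]) (ψ : R → S) (hψ : ψ 0 = 0) :
    (p.sum fun n c => ψ c * 0 ^ n) = ψ (p.coeff 0) := by
  rw [sum_eq_single_zero]
  · simp
  · intro n hn c
    simp [hn]
  · simp [hψ]

end Polynomial

section LambdaBracket

variable {F V : Type*} [Field F] [CommRing V] [Algebra F V] (der : V →ₗ[F] V)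

theorem coeff_zero_dCoeff (p : V[X]) : (dCoeff der p).coeff 0 = der (p.coeff 0) := by
  rw [← constantCoeff_apply, dCoeff, map_polynomial_sum]
  simp only [map_mul, map_pow, constantCoeff_apply, coeff_C_zero, coeff_X_zero]
  exact sum_mul_zero_pow p der (map_zero der)

theorem coeff_zero_opS (p : V[X]) : (opS der p).coeff 0 = der (p.coeff 0) := by
  rw [opS, coeff_add, coeff_X_mul_zero, zero_add, coeff_zero_dCoeff]

theorem coeff_zero_opT (p : V[X]) : (opT der p).coeff 0 = -der (p.coeff 0) := by
  rw [opT, coeff_sub, coeff_neg, coeff_X_mul_zero, neg_zero, zero_sub, coeff_zero_dCoeff]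

theorem coeff_zero_iterate_opT_mem_range {n : ℕ} (hn : n ≠ 0) (p : V[X]) :
    ((opT der)^[n] p).coeff 0 ∈ LinearMap.range der := by
  obtain ⟨m, rfl⟩ := Nat.exists_eq_succ_of_ne_zero hn
  rw [Function.iterate_succ_apply', coeff_zero_opT]
  exact neg_mem (LinearMap.mem_range_self der _)

theorem coeff_zero_sub_negSubst_mem_range (p : V[X]) :
    p.coeff 0 - (negSubst der p).coeff 0 ∈ LinearMap.range der := by
  rw [← Submodule.Quotient.eq, ← Submodule.mkQ_apply, ← Submodule.mkQ_apply, negSubst,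
    coeff_sum, map_polynomial_sum, sum_eq_single_zero]
  · simp
  · intro n hn c
    exact (Submodule.Quotient.mk_eq_zero _).mpr (coeff_zero_iterate_opT_mem_range der hn _)
  · simp

theorem coeff_zero_coeff_zero_jacobiLHS (B : V →ₗ[F] V →ₗ[F] V[X]) (f g h : V) :
    ((jacobiLHS B f g h).coeff 0).coeff 0 = (B f ((B g h).coeff 0)).coeff 0
      - (B g ((B f h).coeff 0)).coeff 0 - (B ((B f g).coeff 0) h).coeff 0 := by
  rw [← constantCoeff_apply, ← constantCoeff_apply]
  simp only [jacobiLHS, map_sub, map_polynomial_sum, map_mul, map_pow, map_add]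
  simp only [constantCoeff_apply, coeff_C_zero, coeff_X_zero, add_zero, LinearMap.zero_apply,
    coeff_zero, map_zero, zero_mul, sum_mul_zero_pow]

end LambdaBracket

theorem pva_quotient_lie_algebra_general
    (F V : Type*) [Field F] [CommRing V] [Algebra F V]
    (der : V →ₗ[F] V)
    (B : V →ₗ[F] V →ₗ[F] Polynomial V)
    (hsesq1 : ∀ f g : V, B (der f) g = -(Polynomial.X * B f g))
    (hsesq2 : ∀ f g : V, B f (der g) = opS der (B f g))
    (hskew : ∀ f g : V, B g f = -negSubst der (B f g))
    (hjac : ∀ f g h : V, jacobiLHS B f g h = 0) :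
    -- well-definedness on V/∂V
    (∀ f f' g g' : V, f - f' ∈ LinearMap.range der → g - g' ∈ LinearMap.range der →
      (B f g).coeff 0 - (B f' g').coeff 0 ∈ LinearMap.range der) ∧
    -- skew-symmetry of the induced bracket on V/∂V
    (∀ f g : V, (B f g).coeff 0 + (B g f).coeff 0 ∈ LinearMap.range der) ∧
    -- Jacobi identity of the induced bracket on V/∂V
    (∀ f g h : V,
      (B f ((B g h).coeff 0)).coeff 0 - (B ((B f g).coeff 0) h).coeff 0 -
        (B g ((B f h).coeff 0)).coeff 0 ∈ LinearMap.range der) := by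
  refine ⟨?_, ?_, ?_⟩
  · rintro f f' g g' ⟨a, ha⟩ ⟨b, hb⟩
    refine ⟨(B f' b).coeff 0, ?_⟩
    calc der ((B f' b).coeff 0)
        = (B (f - f') g).coeff 0 + (B f' (g - g')).coeff 0 := by
          rw [← ha, ← hb, hsesq1, hsesq2, coeff_neg, coeff_X_mul_zero, neg_zero, zero_add, coeff_zero_opS]
      _ = _ := by simp only [map_sub, LinearMap.sub_apply, coeff_sub]; ring
  · intro f g
    simpa only [hskew f g, coeff_neg, sub_eq_add_neg]
      using coeff_zero_sub_negSubst_mem_range der (B f g)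
  · intro f g h
    have hjac₀ := coeff_zero_coeff_zero_jacobiLHS B f g h
    rw [hjac, coeff_zero, coeff_zero] at hjac₀
    convert zero_mem (LinearMap.range der) using 1
    linear_combination -hjac₀

/-- If `(V, ∂)` is a differential algebra with a `λ`-bracket `B`
satisfying sesquilinearity, the Leibniz rules, skew-symmetry and the Jacobi
identity (i.e. `V` is a Poisson vertex algebra), then
`{∫f, ∫g} := ∫({f_λ g}|_{λ=0})` is well defined on `V/∂V` and makes `V/∂V`
a Lie algebra (skew-symmetry and the Jacobi identity hold modulo `∂V`). -/
theorem pva_quotient_lie_algebra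
    (F V : Type*) [Field F] [CharZero F] [CommRing V] [Algebra F V]
    (der : V →ₗ[F] V)
    (hder : ∀ a b : V, der (a * b) = a * der b + der a * b)
    (B : V →ₗ[F] V →ₗ[F] Polynomial V)
    (hsesq1 : ∀ f g : V, B (der f) g = -(Polynomial.X * B f g))
    (hsesq2 : ∀ f g : V, B f (der g) = opS der (B f g))
    (hlleib : ∀ f g h : V,
      B f (g * h) = B f g * Polynomial.C h + B f h * Polynomial.C g)
    (hrleib : ∀ f g h : V, B (f * h) g =
      (B f g).sum (fun n c => Polynomial.C c * (opS der)^[n] (Polynomial.C h)) +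
      (B h g).sum (fun n c => Polynomial.C c * (opS der)^[n] (Polynomial.C f)))
    (hskew : ∀ f g : V, B g f = -negSubst der (B f g))
    (hjac : ∀ f g h : V, jacobiLHS B f g h = 0) :
    -- well-definedness on V/∂V
    (∀ f f' g g' : V, f - f' ∈ LinearMap.range der → g - g' ∈ LinearMap.range der →
      (B f g).coeff 0 - (B f' g').coeff 0 ∈ LinearMap.range der) ∧
    -- skew-symmetry of the induced bracket on V/∂V
    (∀ f g : V, (B f g).coeff 0 + (B g f).coeff 0 ∈ LinearMap.range der) ∧
    -- Jacobi identity of the induced bracket on V/∂V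
    (∀ f g h : V,
      (B f ((B g h).coeff 0)).coeff 0 - (B ((B f g).coeff 0) h).coeff 0 -
        (B g ((B f h).coeff 0)).coeff 0 ∈ LinearMap.range der) :=
  pva_quotient_lie_algebra_general F V der B hsesq1 hsesq2 hskew hjac
end

section
/- Let V be an algebra of differential functions in variables u_1,…,u_ℓ and let H_{ij}(λ) ∈ F[λ]⊗V. Then the λ-bracket defined by the Master Formula {f_λ g} = Σ_{i,j,m,n} (∂g/∂u_j^{(n)}) (λ+∂)^n H_{ji}(λ+∂) (-λ-∂)^m (∂f/∂u_i^{(m)}) satisfies the sesquilinearity axioms {∂f_λ g} = -λ{f_λ g} and {f_λ ∂g} = (λ+∂){f_λ g}, and the left and right Leibniz rules, and moreover {u_i_λ u_j} = H_{ji}(λ). -/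
open Polynomial

section LambdaBracket

variable {F V : Type*} [Field F] [CharZero F] [CommRing V] [Algebra F V]

/-- The Master Formula: given partial derivatives `Dp i n = ∂/∂u_i^{(n)}` and a
matrix `H` (with `{u_i λ u_j} = H j i`),
`{f_λ g} = Σ_{i,j,m,n} (∂g/∂u_j^{(n)}) (λ+∂)^n H_{ji}(λ+∂) (-λ-∂)^m (∂f/∂u_i^{(m)})`. -/
noncomputable def masterFormula {ℓ : ℕ} (der : V →ₗ[F] V)
    (Dp : Fin ℓ → ℕ → (V →ₗ[F] V)) (H : Fin ℓ → Fin ℓ → Polynomial V)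
    (f g : V) : Polynomial V :=
  ∑ᶠ (i : Fin ℓ), ∑ᶠ (j : Fin ℓ), ∑ᶠ (m : ℕ), ∑ᶠ (n : ℕ),
    Polynomial.C (Dp j n g) *
      (opS der)^[n] ((H j i).sum fun p c =>
        Polynomial.C c * (opS der)^[p] ((opT der)^[m] (Polynomial.C (Dp i m f))))

end LambdaBracket

/-! Package the partial derivatives of `f` as `P_{f,i}(λ) = Σ_m (∂f/∂u_i^{(m)}) λ^m`. Then
`{f_λ g} = Σ_{i,j} P_{g,j}(λ+∂) H_{ji}(λ+∂) P_{f,i}^*(λ)`, where `P^*(λ) = Σ_m (-λ-∂)^m p_m`.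
The commutation rule `[∂/∂u_i^{(n)}, ∂] = ∂/∂u_i^{(n-1)}` says precisely that
`P_{∂f,i} = (λ+∂) P_{f,i}` with `∂` acting on the coefficients, so the two sesquilinearity axioms
reduce to the operator identities `((λ+∂)P)(λ+∂) = (λ+∂) ∘ P(λ+∂)` and `((λ+∂)P)^* = -λ P^*`.
The Leibniz rule for `∂/∂u_i^{(n)}` gives `P_{fg,i} = f P_{g,i} + g P_{f,i}`, which yields the left
Leibniz rule at once, and the right one because `Q ↦ Q(λ+∂) h` commutes with `λ+∂` and with
multiplication by elements of `V`. -/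

open Polynomial Function

section Operators

variable {F V : Type*} [Field F] [CommRing V] [Algebra F V] (der : V →ₗ[F] V)

theorem coeff_dCoeff (p : V[X]) (k : ℕ) : (dCoeff der p).coeff k = der (p.coeff k) := by
  simp only [dCoeff, Polynomial.sum_def, finsetSum_coeff, coeff_C_mul_X_pow, Finset.sum_ite_eq]
  split_ifs with h
  · rfl
  · rw [notMem_support_iff.mp h, map_zero]

theorem dCoeff_add (p q : V[X]) : dCoeff der (p + q) = dCoeff der p + dCoeff der q := by
  ext k; simp [coeff_dCoeff]

theorem dCoeff_X_mul (p : V[X]) : dCoeff der (X * p) = X * dCoeff der p := by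
  ext (_ | k) <;> simp [coeff_dCoeff]

theorem dCoeff_monomial (n : ℕ) (a : V) : dCoeff der (monomial n a) = monomial n (der a) := by
  ext k; simp [coeff_dCoeff, coeff_monomial, apply_ite der]

theorem opS_add (p q : V[X]) : opS der (p + q) = opS der p + opS der q := by
  simp only [opS, dCoeff_add]; ring

theorem opS_X_mul (p : V[X]) : opS der (X * p) = X * opS der p := by
  simp only [opS, dCoeff_X_mul]; ring

theorem opS_monomial (n : ℕ) (a : V) :
    opS der (monomial n a) = monomial (n + 1) a + monomial n (der a) := by
  rw [opS, dCoeff_monomial, X_mul_monomial]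

theorem opS_C_mul (hder : ∀ a b : V, der (a * b) = a * der b + der a * b) (b : V) (p : V[X]) :
    opS der (C b * p) = C b * opS der p + C (der b) * p := by
  have : dCoeff der (C b * p) = C b * dCoeff der p + C (der b) * p := by
    ext k; simp [coeff_dCoeff, hder]
  rw [opS, opS, this]; ring

theorem opT_C (a : V) : opT der (C a) = -(X * C a) - C (der a) := by
  rw [opT, ← monomial_zero_left, dCoeff_monomial, monomial_zero_left, monomial_zero_left]

theorem opT_eq_neg_opS (p : V[X]) : opT der p = -opS der p := by
  rw [opT, opS]; ring

noncomputable def opSHom : V[X] →+ V[X] := AddMonoidHom.mk' (opS der) (opS_add der)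

noncomputable def opTHom : V[X] →+ V[X] :=
  AddMonoidHom.mk' (opT der) fun p q => by simp only [opT_eq_neg_opS, opS_add]; abel

theorem iterate_opS_add (n : ℕ) (p q : V[X]) :
    (opS der)^[n] (p + q) = (opS der)^[n] p + (opS der)^[n] q :=
  iterate_map_add (opSHom der) n p q

theorem iterate_opT_zero (n : ℕ) : (opT der)^[n] (0 : V[X]) = 0 :=
  iterate_map_zero (opTHom der) n

theorem iterate_opT_add (n : ℕ) (p q : V[X]) :
    (opT der)^[n] (p + q) = (opT der)^[n] p + (opT der)^[n] q :=
  iterate_map_add (opTHom der) n p q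

theorem iterate_opT_neg (n : ℕ) (p : V[X]) : (opT der)^[n] (-p) = -(opT der)^[n] p :=
  iterate_map_neg (opTHom der) n p

theorem iterate_opT_sub (n : ℕ) (p q : V[X]) :
    (opT der)^[n] (p - q) = (opT der)^[n] p - (opT der)^[n] q :=
  iterate_map_sub (opTHom der) n p q

/-- `evalS der P x = P(λ+∂) x`, with `λ+∂` acting on everything to its right. -/
noncomputable def evalS : V[X] →+ V[X] →+ V[X] :=
  AddMonoidHom.mk'
    (fun P => AddMonoidHom.mk' (fun x => P.sum fun n c => C c * (opS der)^[n] x) fun x y => by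
      simp only [iterate_opS_add, mul_add, Polynomial.sum_add])
    fun P Q => AddMonoidHom.ext fun x =>
      sum_add_index P Q (fun n c => C c * (opS der)^[n] x) (fun _ => by rw [C_0, zero_mul])
        fun _ _ _ => by rw [C_add, add_mul]

theorem evalS_apply (P x : V[X]) : evalS der P x = P.sum fun n c => C c * (opS der)^[n] x := rfl

/-- The adjoint `P^*(λ) = Σ_m (-λ-∂)^m p_m` of `P(λ) = Σ_m p_m λ^m`. -/
noncomputable def adjS : V[X] →+ V[X] :=
  AddMonoidHom.mk' (fun P => P.sum fun m a => (opT der)^[m] (C a)) fun P Q =>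
    sum_add_index P Q (fun m a => (opT der)^[m] (C a)) (fun _ => by rw [C_0, iterate_opT_zero])
      fun _ _ _ => by rw [C_add, iterate_opT_add]

theorem evalS_monomial (n : ℕ) (a : V) (x : V[X]) :
    evalS der (monomial n a) x = C a * (opS der)^[n] x :=
  sum_monomial_index a (fun n c => C c * (opS der)^[n] x) (by rw [C_0, zero_mul])

theorem evalS_C (a : V) (x : V[X]) : evalS der (C a) x = C a * x := by
  rw [← monomial_zero_left, evalS_monomial, iterate_zero_apply, monomial_zero_left]

theorem evalS_one (x : V[X]) : evalS der 1 x = x := by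
  rw [← C_1, evalS_C, C_1, one_mul]

theorem adjS_monomial (m : ℕ) (a : V) : adjS der (monomial m a) = (opT der)^[m] (C a) :=
  sum_monomial_index a (fun m a => (opT der)^[m] (C a)) (by rw [C_0, iterate_opT_zero])

theorem adjS_one : adjS der (1 : V[X]) = 1 := by
  rw [← C_1, ← monomial_zero_left, adjS_monomial, iterate_zero_apply, monomial_zero_left]

theorem evalS_C_mul (b : V) (P x : V[X]) : evalS der (C b * P) x = C b * evalS der P x := by
  induction P using Polynomial.induction_on' with
  | add P Q hP hQ => rw [mul_add, map_add, AddMonoidHom.add_apply, hP, hQ, map_add,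
      AddMonoidHom.add_apply, mul_add]
  | monomial n a => rw [C_mul_monomial, evalS_monomial, evalS_monomial, C_mul, mul_assoc]

variable {der}

theorem evalS_opS (hder : ∀ a b : V, der (a * b) = a * der b + der a * b) (P x : V[X]) :
    evalS der (opS der P) x = opS der (evalS der P x) := by
  induction P using Polynomial.induction_on' with
  | add P Q hP hQ => rw [opS_add, map_add, AddMonoidHom.add_apply, hP, hQ, map_add,
      AddMonoidHom.add_apply, opS_add]
  | monomial n a => rw [opS_monomial, map_add, AddMonoidHom.add_apply, evalS_monomial,
      evalS_monomial, evalS_monomial, opS_C_mul der hder, iterate_succ_apply']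

theorem evalS_apply_one (hder : ∀ a b : V, der (a * b) = a * der b + der a * b) (P : V[X]) :
    evalS der P 1 = P := by
  have hder1 : der 1 = 0 := by simpa using hder 1 1
  have hpow (n : ℕ) : (opS der)^[n] 1 = X ^ n := by
    induction n with
    | zero => rfl
    | succ n ih => rw [iterate_succ_apply', ih, ← monomial_one_right_eq_X_pow, opS_monomial,
        hder1, monomial_zero_right, add_zero, monomial_one_right_eq_X_pow]
  rw [evalS_apply]
  simp only [hpow]
  exact sum_C_mul_X_pow_eq P

end Operators

section Commuting

variable {F V : Type*} [Field F] [CommRing V] [Algebra F V] {der : V →ₗ[F] V}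

theorem commute_mulLeft_X_opS : Function.Commute ⇑(AddMonoidHom.mulLeft (X : V[X])) (opS der) :=
  fun p => (opS_X_mul der p).symm

theorem commute_evalS_flip_opS (hder : ∀ a b : V, der (a * b) = a * der b + der a * b)
    (x : V[X]) : Function.Commute ⇑((evalS der).flip x) (opS der) :=
  fun P => evalS_opS hder P x

variable {φ : V[X] →+ V[X]}

theorem Function.Commute.opT_of_opS (hS : Function.Commute ⇑φ (opS der)) :
    Function.Commute ⇑φ (opT der) :=
  fun p => by rw [opT_eq_neg_opS, opT_eq_neg_opS, map_neg, hS p]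

theorem map_evalS (hS : Function.Commute ⇑φ (opS der)) (hC : ∀ b p, φ (C b * p) = C b * φ p)
    (Q y : V[X]) : φ (evalS der Q y) = evalS der Q (φ y) := by
  have hSn (n : ℕ) (p : V[X]) : φ ((opS der)^[n] p) = (opS der)^[n] (φ p) := hS.iterate_right n p
  simp only [evalS_apply, Polynomial.sum_def, map_sum, hC, hSn]

theorem evalS_X_mul (Q y : V[X]) : evalS der Q (X * y) = X * evalS der Q y :=
  (map_evalS commute_mulLeft_X_opS (fun _ _ => mul_left_comm _ _ _) Q y).symm

theorem evalS_evalS (hder : ∀ a b : V, der (a * b) = a * der b + der a * b) (Q y x : V[X]) :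
    evalS der (evalS der Q y) x = evalS der Q (evalS der y x) :=
  map_evalS (commute_evalS_flip_opS hder x) (fun b p => evalS_C_mul der b p x) Q y

theorem adjS_opS (P : V[X]) : adjS der (opS der P) = -(X * adjS der P) := by
  induction P using Polynomial.induction_on' with
  | add P Q hP hQ => rw [opS_add, map_add, hP, hQ, map_add, mul_add, neg_add]
  | monomial m a =>
    have hX : (opT der)^[m] (X * C a) = X * (opT der)^[m] (C a) :=
      ((commute_mulLeft_X_opS.opT_of_opS).iterate_right m (C a)).symm
    have hCder : C (der a) = -(X * C a) - opT der (C a) := by rw [opT_C]; ring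
    rw [opS_monomial, map_add, adjS_monomial, adjS_monomial, adjS_monomial, hCder,
      iterate_opT_sub, iterate_opT_neg, hX, iterate_succ_apply]
    ring

theorem evalS_adjS_C (hder : ∀ a b : V, der (a * b) = a * der b + der a * b) (h : V)
    (P : V[X]) : evalS der (adjS der P) (C h) = adjS der (C h * P) := by
  induction P using Polynomial.induction_on' with
  | add P Q hP hQ => rw [map_add, map_add, AddMonoidHom.add_apply, hP, hQ, mul_add, map_add]
  | monomial m a =>
    rw [adjS_monomial, C_mul_monomial, adjS_monomial, mul_comm, C_mul, ← evalS_C der]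
    exact ((commute_evalS_flip_opS hder (C h)).opT_of_opS.iterate_right m (C a))

end Commuting

section MasterFormula

variable {F V : Type*} [Field F] [CommRing V] [Algebra F V] {ℓ : ℕ}
  (der : V →ₗ[F] V) (Dp : Fin ℓ → ℕ → (V →ₗ[F] V))

def PartialsVanishFrom (N : ℕ) (f : V) : Prop := ∀ i n, N ≤ n → Dp i n f = 0

/-- The polynomial `P_{f,i}(λ)` of the header, truncated to degrees `< N`; nothing is lost as soon
as `PartialsVanishFrom Dp N f`. -/
noncomputable def partialsPoly (i : Fin ℓ) (N : ℕ) (f : V) : V[X] :=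
  ∑ n ∈ Finset.range N, monomial n (Dp i n f)

theorem evalS_partialsPoly (i : Fin ℓ) (N : ℕ) (f : V) (y : V[X]) :
    evalS der (partialsPoly Dp i N f) y = ∑ n ∈ Finset.range N, C (Dp i n f) * (opS der)^[n] y := by
  simp only [partialsPoly, map_sum, AddMonoidHom.finsetSum_apply, evalS_monomial]

theorem adjS_partialsPoly (i : Fin ℓ) (N : ℕ) (f : V) :
    adjS der (partialsPoly Dp i N f) = ∑ m ∈ Finset.range N, (opT der)^[m] (C (Dp i m f)) := by
  simp only [partialsPoly, map_sum, adjS_monomial]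

theorem masterFormula_eq_sum (H : Fin ℓ → Fin ℓ → V[X]) {f g : V} {M N : ℕ}
    (hf : PartialsVanishFrom Dp M f) (hg : PartialsVanishFrom Dp N g) :
    masterFormula der Dp H f g = ∑ i, ∑ j,
      evalS der (partialsPoly Dp j N g) (evalS der (H j i) (adjS der (partialsPoly Dp i M f))) := by
  simp only [masterFormula, ← evalS_apply, finsum_eq_sum_of_fintype]
  refine Finset.sum_congr rfl fun i _ => Finset.sum_congr rfl fun j _ => ?_
  have finsum_n (y : V[X]) : ∑ᶠ n, C (Dp j n g) * (opS der)^[n] y =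
      evalS der (partialsPoly Dp j N g) y := by
    rw [evalS_partialsPoly]
    refine finsum_eq_sum_of_support_subset _ fun n hn => ?_
    by_contra hnN
    rw [mem_support, hg j n (by simpa using hnN), C_0, zero_mul] at hn
    exact hn rfl
  simp only [finsum_n, adjS_partialsPoly, map_sum]
  refine finsum_eq_sum_of_support_subset _ fun m hm => ?_
  by_contra hmM
  rw [mem_support, hf i m (by simpa using hmM), C_0, iterate_opT_zero, map_zero, map_zero] at hm
  exact hm rfl

variable {der Dp}

theorem exists_partialsVanishFrom {f : V} (hf : {p : Fin ℓ × ℕ | Dp p.1 p.2 f ≠ 0}.Finite) :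
    ∃ N, PartialsVanishFrom Dp N f := by
  obtain ⟨B, hB⟩ := (hf.image Prod.snd).bddAbove
  refine ⟨B + 1, fun i n hn => ?_⟩
  by_contra hne
  have : n ≤ B := hB ⟨(i, n), hne, rfl⟩
  omega

theorem PartialsVanishFrom.mono {M N : ℕ} {f : V} (hf : PartialsVanishFrom Dp M f) (hMN : M ≤ N) :
    PartialsVanishFrom Dp N f :=
  fun i n hn => hf i n (hMN.trans hn)

theorem PartialsVanishFrom.mul
    (hDleib : ∀ i n (a b : V), Dp i n (a * b) = a * Dp i n b + Dp i n a * b)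
    {N : ℕ} {f g : V} (hf : PartialsVanishFrom Dp N f) (hg : PartialsVanishFrom Dp N g) :
    PartialsVanishFrom Dp N (f * g) :=
  fun i n hn => by rw [hDleib, hf i n hn, hg i n hn, mul_zero, zero_mul, add_zero]

theorem PartialsVanishFrom.apply_der
    (hcomm : ∀ i n (f : V), Dp i (n + 1) (der f) = der (Dp i (n + 1) f) + Dp i n f)
    {N : ℕ} {f : V} (hf : PartialsVanishFrom Dp N f) : PartialsVanishFrom Dp (N + 1) (der f) := by
  rintro i (_ | n) hn
  · omega
  · rw [hcomm, hf i (n + 1) (by omega), hf i n (by omega), map_zero, add_zero]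

theorem coeff_partialsPoly (i : Fin ℓ) (N : ℕ) (f : V) (k : ℕ) :
    (partialsPoly Dp i N f).coeff k = if k < N then Dp i k f else 0 := by
  simp [partialsPoly, finsetSum_coeff, coeff_monomial]

theorem partialsPoly_der (hcomm0 : ∀ i (f : V), Dp i 0 (der f) = der (Dp i 0 f))
    (hcomm : ∀ i n (f : V), Dp i (n + 1) (der f) = der (Dp i (n + 1) f) + Dp i n f)
    {i : Fin ℓ} {N : ℕ} {f : V} (hN : Dp i N f = 0) :
    partialsPoly Dp i (N + 1) (der f) = opS der (partialsPoly Dp i (N + 1) f) := by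
  ext (_ | k)
  · simp [coeff_partialsPoly, opS, coeff_dCoeff, hcomm0]
  · simp only [coeff_partialsPoly, opS, coeff_add, coeff_X_mul, coeff_dCoeff, hcomm]
    rcases lt_trichotomy k N with hk | rfl | hk
    · simp [hk, Nat.lt_succ_of_lt hk, add_comm]
    · simp [hN]
    · simp [hk.not_gt, show ¬k < N + 1 by omega]

theorem partialsPoly_mul
    (hDleib : ∀ i n (a b : V), Dp i n (a * b) = a * Dp i n b + Dp i n a * b)
    (i : Fin ℓ) (N : ℕ) (f g : V) :
    partialsPoly Dp i N (f * g) = C f * partialsPoly Dp i N g + C g * partialsPoly Dp i N f := by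
  simp only [partialsPoly, hDleib, Finset.mul_sum, ← Finset.sum_add_distrib, C_mul_monomial]
  exact Finset.sum_congr rfl fun n _ => by rw [← map_add, mul_comm g]

variable (der)

theorem masterFormula_der_left (hDfin : ∀ f : V, {p : Fin ℓ × ℕ | Dp p.1 p.2 f ≠ 0}.Finite)
    (hcomm0 : ∀ i (f : V), Dp i 0 (der f) = der (Dp i 0 f))
    (hcomm : ∀ i n (f : V), Dp i (n + 1) (der f) = der (Dp i (n + 1) f) + Dp i n f)
    (H : Fin ℓ → Fin ℓ → V[X]) (f g : V) :
    masterFormula der Dp H (der f) g = -(X * masterFormula der Dp H f g) := by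
  obtain ⟨M, hf⟩ := exists_partialsVanishFrom (hDfin f)
  obtain ⟨N, hg⟩ := exists_partialsVanishFrom (hDfin g)
  rw [masterFormula_eq_sum der Dp H (hf.apply_der hcomm) hg,
    masterFormula_eq_sum der Dp H (hf.mono (M.le_add_right 1)) hg]
  simp only [partialsPoly_der hcomm0 hcomm (hf _ M le_rfl), adjS_opS, map_neg, evalS_X_mul,
    Finset.mul_sum, Finset.sum_neg_distrib]

theorem masterFormula_der_right (hder : ∀ a b : V, der (a * b) = a * der b + der a * b)
    (hDfin : ∀ f : V, {p : Fin ℓ × ℕ | Dp p.1 p.2 f ≠ 0}.Finite)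
    (hcomm0 : ∀ i (f : V), Dp i 0 (der f) = der (Dp i 0 f))
    (hcomm : ∀ i n (f : V), Dp i (n + 1) (der f) = der (Dp i (n + 1) f) + Dp i n f)
    (H : Fin ℓ → Fin ℓ → V[X]) (f g : V) :
    masterFormula der Dp H f (der g) = opS der (masterFormula der Dp H f g) := by
  obtain ⟨M, hf⟩ := exists_partialsVanishFrom (hDfin f)
  obtain ⟨N, hg⟩ := exists_partialsVanishFrom (hDfin g)
  rw [masterFormula_eq_sum der Dp H hf (hg.apply_der hcomm),
    masterFormula_eq_sum der Dp H hf (hg.mono (N.le_add_right 1))]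
  simp only [partialsPoly_der hcomm0 hcomm (hg _ N le_rfl), evalS_opS hder]
  change _ = opSHom der _
  simp only [map_sum]
  rfl

theorem masterFormula_mul_right
    (hDleib : ∀ i n (a b : V), Dp i n (a * b) = a * Dp i n b + Dp i n a * b)
    (hDfin : ∀ f : V, {p : Fin ℓ × ℕ | Dp p.1 p.2 f ≠ 0}.Finite)
    (H : Fin ℓ → Fin ℓ → V[X]) (f g h : V) :
    masterFormula der Dp H f (g * h) =
      masterFormula der Dp H f g * C h + masterFormula der Dp H f h * C g := by
  obtain ⟨M, hf⟩ := exists_partialsVanishFrom (hDfin f)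
  obtain ⟨N₁, hg⟩ := exists_partialsVanishFrom (hDfin g)
  obtain ⟨N₂, hh⟩ := exists_partialsVanishFrom (hDfin h)
  have hg' := hg.mono (le_max_left N₁ N₂)
  have hh' := hh.mono (le_max_right N₁ N₂)
  rw [masterFormula_eq_sum der Dp H hf (hg'.mul hDleib hh'), masterFormula_eq_sum der Dp H hf hg',
    masterFormula_eq_sum der Dp H hf hh']
  simp only [partialsPoly_mul hDleib, map_add, AddMonoidHom.add_apply, evalS_C_mul,
    Finset.sum_add_distrib, ← Finset.mul_sum]
  ring

theorem masterFormula_mul_left (hder : ∀ a b : V, der (a * b) = a * der b + der a * b)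
    (hDleib : ∀ i n (a b : V), Dp i n (a * b) = a * Dp i n b + Dp i n a * b)
    (hDfin : ∀ f : V, {p : Fin ℓ × ℕ | Dp p.1 p.2 f ≠ 0}.Finite)
    (H : Fin ℓ → Fin ℓ → V[X]) (f g h : V) :
    masterFormula der Dp H (f * h) g =
      evalS der (masterFormula der Dp H f g) (C h) +
        evalS der (masterFormula der Dp H h g) (C f) := by
  obtain ⟨M₁, hf⟩ := exists_partialsVanishFrom (hDfin f)
  obtain ⟨N, hg⟩ := exists_partialsVanishFrom (hDfin g)
  obtain ⟨M₂, hh⟩ := exists_partialsVanishFrom (hDfin h)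
  have hf' := hf.mono (le_max_left M₁ M₂)
  have hh' := hh.mono (le_max_right M₁ M₂)
  rw [masterFormula_eq_sum der Dp H (hf'.mul hDleib hh') hg, masterFormula_eq_sum der Dp H hf' hg,
    masterFormula_eq_sum der Dp H hh' hg]
  simp only [map_sum, AddMonoidHom.finsetSum_apply, evalS_evalS hder, evalS_adjS_C hder,
    partialsPoly_mul hDleib, map_add, Finset.sum_add_distrib]
  exact add_comm _ _

theorem masterFormula_generators (hder : ∀ a b : V, der (a * b) = a * der b + der a * b)
    {u : Fin ℓ → V} (hu : ∀ (i j : Fin ℓ) (n : ℕ), Dp j n (u i) = if j = i ∧ n = 0 then 1 else 0)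
    (H : Fin ℓ → Fin ℓ → V[X]) (i j : Fin ℓ) :
    masterFormula der Dp H (u i) (u j) = H j i := by
  have hu' (k : Fin ℓ) : PartialsVanishFrom Dp 1 (u k) := fun a n hn => by
    rw [hu]; simp [Nat.one_le_iff_ne_zero.mp hn]
  have hpoly (a k : Fin ℓ) : partialsPoly Dp a 1 (u k) = if a = k then 1 else 0 := by
    simp only [partialsPoly, Finset.sum_range_one, hu, and_true, monomial_zero_left]
    split_ifs <;> simp
  rw [masterFormula_eq_sum der Dp H (hu' i) (hu' j),
    Finset.sum_eq_single_of_mem i (Finset.mem_univ i) fun a _ hai => ?_,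
    Finset.sum_eq_single_of_mem j (Finset.mem_univ j) fun b _ hbj => ?_]
  · simp only [hpoly, if_true, adjS_one, evalS_apply_one hder, evalS_one]
  · simp only [hpoly, if_neg hbj, map_zero, AddMonoidHom.zero_apply]
  · simp only [hpoly, if_neg hai, map_zero, Finset.sum_const_zero]

end MasterFormula

theorem master_formula_lambda_bracket_general
    (F V : Type*) [Field F] [CommRing V] [Algebra F V] (ℓ : ℕ)
    (der : V →ₗ[F] V)
    (hder : ∀ a b : V, der (a * b) = a * der b + der a * b)
    (Dp : Fin ℓ → ℕ → (V →ₗ[F] V))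
    (hDleib : ∀ i n (a b : V), Dp i n (a * b) = a * Dp i n b + Dp i n a * b)
    (hDfin : ∀ f : V, {p : Fin ℓ × ℕ | Dp p.1 p.2 f ≠ 0}.Finite)
    (hcomm0 : ∀ i (f : V), Dp i 0 (der f) = der (Dp i 0 f))
    (hcomm : ∀ i n (f : V),
      Dp i (n + 1) (der f) = der (Dp i (n + 1) f) + Dp i n f)
    (u : Fin ℓ → V)
    (hu : ∀ (i j : Fin ℓ) (n : ℕ),
      Dp j n (u i) = if j = i ∧ n = 0 then 1 else 0)
    (H : Fin ℓ → Fin ℓ → Polynomial V) :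
    -- first sesquilinearity axiom {∂f_λ g} = -λ{f_λ g}
    (∀ f g : V, masterFormula der Dp H (der f) g =
      -(Polynomial.X * masterFormula der Dp H f g)) ∧
    -- second sesquilinearity axiom {f_λ ∂g} = (λ+∂){f_λ g}
    (∀ f g : V, masterFormula der Dp H f (der g) =
      opS der (masterFormula der Dp H f g)) ∧
    -- left Leibniz rule {f_λ gh} = {f_λ g}h + {f_λ h}g
    (∀ f g h : V, masterFormula der Dp H f (g * h) =
      masterFormula der Dp H f g * Polynomial.C h +
      masterFormula der Dp H f h * Polynomial.C g) ∧
    -- right Leibniz rule {fh_λ g} = {f_{λ+∂} g}→h + {h_{λ+∂} g}→f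
    (∀ f g h : V, masterFormula der Dp H (f * h) g =
      (masterFormula der Dp H f g).sum
        (fun n c => Polynomial.C c * (opS der)^[n] (Polynomial.C h)) +
      (masterFormula der Dp H h g).sum
        (fun n c => Polynomial.C c * (opS der)^[n] (Polynomial.C f))) ∧
    -- values on generators: {u_i λ u_j} = H j i
    (∀ i j : Fin ℓ, masterFormula der Dp H (u i) (u j) = H j i) := by
  exact ⟨masterFormula_der_left der hDfin hcomm0 hcomm H,
    masterFormula_der_right der hder hDfin hcomm0 hcomm H,
    masterFormula_mul_right der hDleib hDfin H,
    masterFormula_mul_left der hder hDleib hDfin H,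
    masterFormula_generators der hder hu H⟩

/-- Let `V` be an algebra of differential functions in the
variables `u_1, …, u_ℓ` and `H_{ij}(λ) ∈ F[λ] ⊗ V`.  The `λ`-bracket defined
by the Master Formula satisfies the sesquilinearity axioms, the left and right
Leibniz rules, and `{u_i λ u_j} = H_{ji}(λ)`. -/
theorem master_formula_lambda_bracket
    (F V : Type*) [Field F] [CharZero F] [CommRing V] [Algebra F V] (ℓ : ℕ)
    (der : V →ₗ[F] V)
    (hder : ∀ a b : V, der (a * b) = a * der b + der a * b)
    (Dp : Fin ℓ → ℕ → (V →ₗ[F] V))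
    (hDleib : ∀ i n (a b : V), Dp i n (a * b) = a * Dp i n b + Dp i n a * b)
    (hDfin : ∀ f : V, {p : Fin ℓ × ℕ | Dp p.1 p.2 f ≠ 0}.Finite)
    (hDcomm : ∀ i n j m (f : V), Dp i n (Dp j m f) = Dp j m (Dp i n f))
    (hcomm0 : ∀ i (f : V), Dp i 0 (der f) = der (Dp i 0 f))
    (hcomm : ∀ i n (f : V),
      Dp i (n + 1) (der f) = der (Dp i (n + 1) f) + Dp i n f)
    (u : Fin ℓ → V)
    (hu : ∀ (i j : Fin ℓ) (n : ℕ),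
      Dp j n (u i) = if j = i ∧ n = 0 then 1 else 0)
    (H : Fin ℓ → Fin ℓ → Polynomial V) :
    -- first sesquilinearity axiom {∂f_λ g} = -λ{f_λ g}
    (∀ f g : V, masterFormula der Dp H (der f) g =
      -(Polynomial.X * masterFormula der Dp H f g)) ∧
    -- second sesquilinearity axiom {f_λ ∂g} = (λ+∂){f_λ g}
    (∀ f g : V, masterFormula der Dp H f (der g) =
      opS der (masterFormula der Dp H f g)) ∧
    -- left Leibniz rule {f_λ gh} = {f_λ g}h + {f_λ h}g
    (∀ f g h : V, masterFormula der Dp H f (g * h) =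
      masterFormula der Dp H f g * Polynomial.C h +
      masterFormula der Dp H f h * Polynomial.C g) ∧
    -- right Leibniz rule {fh_λ g} = {f_{λ+∂} g}→h + {h_{λ+∂} g}→f
    (∀ f g h : V, masterFormula der Dp H (f * h) g =
      (masterFormula der Dp H f g).sum
        (fun n c => Polynomial.C c * (opS der)^[n] (Polynomial.C h)) +
      (masterFormula der Dp H h g).sum
        (fun n c => Polynomial.C c * (opS der)^[n] (Polynomial.C f))) ∧
    -- values on generators: {u_i λ u_j} = H j i
    (∀ i j : Fin ℓ, masterFormula der Dp H (u i) (u j) = H j i) :=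
  master_formula_lambda_bracket_general F V ℓ der hder Dp hDleib hDfin hcomm0 hcomm u hu H
end
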